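/- arXiv:2006.04259 — 6 statements merged into one kernel-verified Lean document; each statement's English description precedes it below -/
import Mathlib

section
/- Let Z and C be nonempty finite types. Let qz : Z → ℝ and qc : C → ℝ be positive probability vectors, let π : C → ℝ be a positive probability vector, and let pzc : Z → C → ℝ, px : Z → ℝ, py : Z → C → ℝ be strictly positive functions. Then ∑_{z,c} qz z * qc c * Real.log ((py z c * px z * pzc z c * π c) / (qz z * qc c)) = ∑_{z,c} qz z * qc c * Real.log (py z c) + ∑_z qz z * Real.log (px z) − KL(qc‖π) − ∑_c qc c * (∑_z qz z * Real.log (qz z / pzc z c)). (Proposition 2 of the paper: under the mean-field factorization q(z,c|x) = q(z|x)q(c|x) and the generative factorization p(x,y,z,c) = p(y|z,c)p(x|z)p(z|c)p(c), the ELBO decomposes as E_q log p(y|z,c) + E_q log p(x|z) − KL(q(c|x)‖p(c)) − ∑_c q(c|x) KL(q(z|x)‖p(z|c)).) -/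
/-- Proposition 2 (ELBO decomposition): under the mean-field factorization
`q(z,c|x) = q(z|x) q(c|x)` and the generative factorization
`p(x,y,z,c) = p(y|z,c) p(x|z) p(z|c) p(c)`, the ELBO decomposes as
`E_q log p(y|z,c) + E_q log p(x|z) − KL(q(c|x)‖p(c))
  − ∑_c q(c|x) KL(q(z|x)‖p(z|c))`. -/
theorem dgc_elbo_decomposition_prop2
    {Z C : Type*} [Fintype Z] [Nonempty Z] [Fintype C] [Nonempty C]
    (qz : Z → ℝ) (qc : C → ℝ) (pr : C → ℝ)
    (pzc : Z → C → ℝ) (px : Z → ℝ) (py : Z → C → ℝ)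
    (hqz : ∀ z, 0 < qz z) (hqzsum : ∑ z, qz z = 1)
    (hqc : ∀ c, 0 < qc c) (hqcsum : ∑ c, qc c = 1)
    (hpr : ∀ c, 0 < pr c) (hprsum : ∑ c, pr c = 1)
    (hpzc : ∀ z c, 0 < pzc z c) (hpx : ∀ z, 0 < px z) (hpy : ∀ z c, 0 < py z c) :
    ∑ z, ∑ c, qz z * qc c *
        Real.log ((py z c * px z * pzc z c * pr c) / (qz z * qc c))
      = (∑ z, ∑ c, qz z * qc c * Real.log (py z c))
        + (∑ z, qz z * Real.log (px z))
        - (∑ c, qc c * Real.log (qc c / pr c))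
        - (∑ c, qc c * (∑ z, qz z * Real.log (qz z / pzc z c))) := by
  have key : ∀ z c, qz z * qc c *
      Real.log ((py z c * px z * pzc z c * pr c) / (qz z * qc c))
      = qz z * qc c * Real.log (py z c) + qz z * qc c * Real.log (px z)
        - qz z * qc c * Real.log (qc c / pr c)
        - qz z * qc c * Real.log (qz z / pzc z c) := by
    intro z c
    have h1 := hqz z; have h2 := hqc c; have h3 := hpy z c
    have h4 := hpx z; have h5 := hpzc z c; have h6 := hpr c
    rw [Real.log_div (by positivity) (by positivity),
        Real.log_mul (by positivity) (by positivity),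
        Real.log_mul (by positivity) (by positivity),
        Real.log_mul (by positivity) (by positivity),
        Real.log_mul (by positivity) (by positivity),
        Real.log_div (by positivity) (by positivity),
        Real.log_div (by positivity) (by positivity)]
    ring
  simp only [key, Finset.sum_sub_distrib, Finset.sum_add_distrib]
  have h1 : ∑ z, ∑ c, qz z * qc c * Real.log (px z)
      = ∑ z, qz z * Real.log (px z) := by
    refine Finset.sum_congr rfl fun z _ => ?_
    calc ∑ c, qz z * qc c * Real.log (px z)
        = (∑ c, qc c) * (qz z * Real.log (px z)) := by
          rw [Finset.sum_mul]; exact Finset.sum_congr rfl fun c _ => by ring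
      _ = qz z * Real.log (px z) := by rw [hqcsum, one_mul]
  have h2 : ∑ z, ∑ c, qz z * qc c * Real.log (qc c / pr c)
      = ∑ c, qc c * Real.log (qc c / pr c) := by
    rw [Finset.sum_comm]
    refine Finset.sum_congr rfl fun c _ => ?_
    calc ∑ z, qz z * qc c * Real.log (qc c / pr c)
        = (∑ z, qz z) * (qc c * Real.log (qc c / pr c)) := by
          rw [Finset.sum_mul]; exact Finset.sum_congr rfl fun z _ => by ring
      _ = qc c * Real.log (qc c / pr c) := by rw [hqzsum, one_mul]
  have h3 : ∑ z, ∑ c, qz z * qc c * Real.log (qz z / pzc z c)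
      = ∑ c, qc c * (∑ z, qz z * Real.log (qz z / pzc z c)) := by
    rw [Finset.sum_comm]
    refine Finset.sum_congr rfl fun c _ => ?_
    rw [Finset.mul_sum]
    exact Finset.sum_congr rfl fun z _ => by ring
  rw [h1, h2, h3]
end

section
/- Let Z and C be nonempty finite types. Let qz : Z → ℝ and qc : C → ℝ be positive probability vectors, let π : C → ℝ be a positive probability vector, and let pzc : Z → C → ℝ, px : Z → ℝ, py : Z → C → ℝ be strictly positive functions. Define pxz : Z → ℝ by pxz z = px z * ∑_c pzc z c * π c (the joint p(x,z)) and pcz : Z → C → ℝ by pcz z c = (pzc z c * π c) / (∑_j pzc z j * π j) (the posterior p(c|z)). Then ∑_{z,c} qz z * qc c * Real.log ((py z c * px z * pzc z c * π c) / (qz z * qc c)) = ∑_{z,c} qz z * qc c * Real.log (py z c) + ∑_z qz z * Real.log (pxz z / qz z) − ∑_z qz z * (∑_c qc c * Real.log (qc c / pcz z c)). (Proposition 3 of the paper: L_ELBO = E_{q(z,c|x)} log p(y|z,c) + E_{q(z|x)} log (p(x,z)/q(z|x)) − E_{q(z|x)} KL(q(c|x)‖p(c|z)).) -/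
/-- Proposition 3 (alternative ELBO decomposition):
`L_ELBO = E_{q(z,c|x)} log p(y|z,c) + E_{q(z|x)} log (p(x,z)/q(z|x))
  − E_{q(z|x)} KL(q(c|x)‖p(c|z))`,
where `p(x,z) = p(x|z) ∑_c p(z|c) p(c)` and
`p(c|z) = p(z|c) p(c) / ∑_j p(z|j) p(j)`. -/
theorem dgc_elbo_decomposition_prop3
    {Z C : Type*} [Fintype Z] [Nonempty Z] [Fintype C] [Nonempty C]
    (qz : Z → ℝ) (qc : C → ℝ) (pr : C → ℝ)
    (pzc : Z → C → ℝ) (px : Z → ℝ) (py : Z → C → ℝ)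
    (hqz : ∀ z, 0 < qz z) (hqzsum : ∑ z, qz z = 1)
    (hqc : ∀ c, 0 < qc c) (hqcsum : ∑ c, qc c = 1)
    (hpr : ∀ c, 0 < pr c) (hprsum : ∑ c, pr c = 1)
    (hpzc : ∀ z c, 0 < pzc z c) (hpx : ∀ z, 0 < px z) (hpy : ∀ z c, 0 < py z c)
    (pxz : Z → ℝ) (hpxz : ∀ z, pxz z = px z * ∑ c, pzc z c * pr c)
    (pcz : Z → C → ℝ)
    (hpcz : ∀ z c, pcz z c = (pzc z c * pr c) / (∑ j, pzc z j * pr j)) :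
    ∑ z, ∑ c, qz z * qc c *
        Real.log ((py z c * px z * pzc z c * pr c) / (qz z * qc c))
      = (∑ z, ∑ c, qz z * qc c * Real.log (py z c))
        + (∑ z, qz z * Real.log (pxz z / qz z))
        - (∑ z, qz z * (∑ c, qc c * Real.log (qc c / pcz z c))) := by
  have hS : ∀ z, 0 < ∑ j, pzc z j * pr j := fun z =>
    Finset.sum_pos (fun j _ => mul_pos (hpzc z j) (hpr j)) Finset.univ_nonempty
  have key : ∀ z c, Real.log ((py z c * px z * pzc z c * pr c) / (qz z * qc c))
      = Real.log (py z c) + Real.log (pxz z / qz z)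
        - Real.log (qc c / pcz z c) := by
    intro z c
    have hSz := hS z
    have hqzz := hqz z
    have hqcc := hqc c
    have h1 : Real.log ((py z c * px z * pzc z c * pr c) / (qz z * qc c))
        = Real.log (py z c) + Real.log (px z) + Real.log (pzc z c) + Real.log (pr c)
          - (Real.log (qz z) + Real.log (qc c)) := by
      rw [Real.log_div (mul_pos (mul_pos (mul_pos (hpy z c) (hpx z)) (hpzc z c)) (hpr c)).ne' (mul_pos hqzz hqcc).ne',
        Real.log_mul (mul_pos (mul_pos (hpy z c) (hpx z)) (hpzc z c)).ne' (hpr c).ne',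
        Real.log_mul (mul_pos (hpy z c) (hpx z)).ne' (hpzc z c).ne',
        Real.log_mul (hpy z c).ne' (hpx z).ne',
        Real.log_mul hqzz.ne' hqcc.ne']
    have h2 : Real.log (pxz z / qz z)
        = Real.log (px z) + Real.log (∑ j, pzc z j * pr j) - Real.log (qz z) := by
      rw [hpxz, Real.log_div (mul_pos (hpx z) hSz).ne' hqzz.ne',
        Real.log_mul (hpx z).ne' hSz.ne']
    have h3 : Real.log (qc c / pcz z c)
        = Real.log (qc c)
          - (Real.log (pzc z c) + Real.log (pr c) - Real.log (∑ j, pzc z j * pr j)) := by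
      rw [hpcz, Real.log_div hqcc.ne' (div_pos (mul_pos (hpzc z c) (hpr c)) hSz).ne',
        Real.log_div (mul_pos (hpzc z c) (hpr c)).ne' hSz.ne',
        Real.log_mul (hpzc z c).ne' (hpr c).ne']
    rw [h1, h2, h3]; ring
  have hmid : ∀ z, qz z * Real.log (pxz z / qz z)
      = ∑ c, qz z * qc c * Real.log (pxz z / qz z) := by
    intro z
    rw [show (∑ c, qz z * qc c * Real.log (pxz z / qz z))
        = (∑ c, qc c) * (qz z * Real.log (pxz z / qz z)) by
      rw [Finset.sum_mul]; exact Finset.sum_congr rfl fun c _ => by ring]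
    rw [hqcsum, one_mul]
  have hlast : ∀ z, qz z * (∑ c, qc c * Real.log (qc c / pcz z c))
      = ∑ c, qz z * qc c * Real.log (qc c / pcz z c) := by
    intro z
    rw [Finset.mul_sum]
    exact Finset.sum_congr rfl fun c _ => by ring
  calc ∑ z, ∑ c, qz z * qc c *
        Real.log ((py z c * px z * pzc z c * pr c) / (qz z * qc c))
      = ∑ z, ∑ c, (qz z * qc c * Real.log (py z c)
          + qz z * qc c * Real.log (pxz z / qz z)
          - qz z * qc c * Real.log (qc c / pcz z c)) := by
        refine Finset.sum_congr rfl fun z _ => Finset.sum_congr rfl fun c _ => ?_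
        rw [key z c]; ring
    _ = (∑ z, ∑ c, qz z * qc c * Real.log (py z c))
        + (∑ z, qz z * Real.log (pxz z / qz z))
        - (∑ z, qz z * (∑ c, qc c * Real.log (qc c / pcz z c))) := by
        simp only [Finset.sum_sub_distrib, Finset.sum_add_distrib]
        congr 1
        · congr 1
          exact Finset.sum_congr rfl fun z _ => (hmid z).symm
        · exact Finset.sum_congr rfl fun z _ => (hlast z).symm
end

section
/- Let K be a nonempty finite type, p : K → ℝ a positive probability vector, and L : K → ℝ with L k > 0 for every k. Define f₀(q) := KL(q‖p) − ∑_k q k * Real.log (L k). Then for every probability vector q : K → ℝ (with 0 ≤ q k, ∑_k q k = 1), f₀(q) ≥ − Real.log (∑_k L k * p k). (Lower-bound part of Proposition 4: the convex program min_{q} KL(q(c|x)‖p(c|z)) − E_{q(c|x)} log p(y|z,c) over the probability simplex has optimal value −log ∑_k p(y|z,c=k) p(c=k|z).) -/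
/-- Lower-bound part of Proposition 4: for every probability vector `q`,
`KL(q‖p) − ∑_k q k * log (L k) ≥ - log (∑_k L k * p k)`. -/
theorem dgc_convex_program_lower_bound
    {K : Type*} [Fintype K] [Nonempty K]
    (p : K → ℝ) (hp : ∀ k, 0 < p k) (hpsum : ∑ k, p k = 1)
    (L : K → ℝ) (hL : ∀ k, 0 < L k)
    (q : K → ℝ) (hq : ∀ k, 0 ≤ q k) (hqsum : ∑ k, q k = 1) :
    (∑ k, q k * Real.log (q k / p k)) - (∑ k, q k * Real.log (L k))
      ≥ - Real.log (∑ k, L k * p k) := by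
  set Z : ℝ := ∑ k, L k * p k with hZdef
  have hZ : 0 < Z := Finset.sum_pos (fun k _ => mul_pos (hL k) (hp k)) Finset.univ_nonempty
  have key : ∀ k, q k - L k * p k / Z ≤
      q k * Real.log (q k / p k) - q k * Real.log (L k) + q k * Real.log Z := by
    intro k
    rcases eq_or_lt_of_le (hq k) with h0 | hpos
    · rw [← h0]
      simp only [zero_mul, zero_sub]
      have : 0 ≤ L k * p k / Z := le_of_lt (div_pos (mul_pos (hL k) (hp k)) hZ)
      linarith
    · have hx : 0 < p k * L k / (q k * Z) :=
        div_pos (mul_pos (hp k) (hL k)) (mul_pos hpos hZ)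
      have hlog := Real.log_le_sub_one_of_pos hx
      have hmul := mul_le_mul_of_nonneg_left hlog (hq k)
      have hexp : q k * (p k * L k / (q k * Z)) = L k * p k / Z := by
        field_simp
      have hlogeq : Real.log (p k * L k / (q k * Z)) =
          -(Real.log (q k / p k) - Real.log (L k) + Real.log Z) := by
        rw [Real.log_div (mul_pos (hp k) (hL k)).ne' (mul_pos hpos hZ).ne',
            Real.log_mul (hp k).ne' (hL k).ne',
            Real.log_mul hpos.ne' hZ.ne',
            Real.log_div hpos.ne' (hp k).ne']
        ring
      rw [hlogeq] at hmul
      nlinarith [hmul, hexp]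
  have hsum : ∑ k, (q k - L k * p k / Z) ≤
      ∑ k, (q k * Real.log (q k / p k) - q k * Real.log (L k) + q k * Real.log Z) :=
    Finset.sum_le_sum (fun k _ => key k)
  have h1 : ∑ k, (q k - L k * p k / Z) = 0 := by
    rw [Finset.sum_sub_distrib, hqsum, ← Finset.sum_div, ← hZdef, div_self hZ.ne']
    ring
  have h2 : ∑ k, (q k * Real.log (q k / p k) - q k * Real.log (L k) + q k * Real.log Z)
      = (∑ k, q k * Real.log (q k / p k)) - (∑ k, q k * Real.log (L k))
        + Real.log Z := by
    rw [Finset.sum_add_distrib, Finset.sum_sub_distrib, ← Finset.sum_mul, hqsum, one_mul]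
  rw [h1, h2] at hsum
  linarith
end

section
/- Let K be a nonempty finite type, p : K → ℝ a positive probability vector, and L : K → ℝ with L k > 0 for every k. Define f₀(q) := KL(q‖p) − ∑_k q k * Real.log (L k), and define q* : K → ℝ by q* k = (L k * p k) / (∑_j L j * p j). Then q* is a positive probability vector and f₀(q*) = − Real.log (∑_k L k * p k). (Attainment part of Proposition 4: the solution of the convex program is q(c=k|x) = p(y|z,c=k) p(c=k|z) / ∑_j p(y|z,c=j) p(c=j|z), Eq. 6 of the paper.) -/
/-- Attainment part of Proposition 4: the Gibbs vector
`q* k = L k * p k / ∑_j L j * p j` is a positive probability vector and achieves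
objective value `− log (∑_k L k * p k)` in the convex program. -/
theorem dgc_convex_program_attainment
    {K : Type*} [Fintype K] [Nonempty K]
    (p : K → ℝ) (hp : ∀ k, 0 < p k) (hpsum : ∑ k, p k = 1)
    (L : K → ℝ) (hL : ∀ k, 0 < L k)
    (qstar : K → ℝ) (hqstar : ∀ k, qstar k = (L k * p k) / (∑ j, L j * p j)) :
    (∀ k, 0 < qstar k) ∧ (∑ k, qstar k = 1) ∧
      (∑ k, qstar k * Real.log (qstar k / p k)) - (∑ k, qstar k * Real.log (L k))
        = - Real.log (∑ k, L k * p k) := by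
  have hS : 0 < ∑ j, L j * p j :=
    Finset.sum_pos (fun j _ => mul_pos (hL j) (hp j)) Finset.univ_nonempty
  have hpos : ∀ k, 0 < qstar k := by
    intro k
    rw [hqstar k]
    exact div_pos (mul_pos (hL k) (hp k)) hS
  have hsum : ∑ k, qstar k = 1 := by
    have : ∑ k, qstar k = (∑ k, L k * p k) / (∑ j, L j * p j) := by
      rw [Finset.sum_congr rfl fun k _ => hqstar k, ← Finset.sum_div]
    rw [this, div_self hS.ne']
  refine ⟨hpos, hsum, ?_⟩
  have hratio : ∀ k, qstar k / p k = L k / (∑ j, L j * p j) := by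
    intro k
    rw [hqstar k, div_div, mul_comm (∑ j, L j * p j) (p k), ← div_div,
      mul_div_assoc, div_self (hp k).ne', mul_one]
  have hlog : ∀ k, Real.log (qstar k / p k)
      = Real.log (L k) - Real.log (∑ j, L j * p j) := by
    intro k
    rw [hratio k, Real.log_div (hL k).ne' hS.ne']
  calc (∑ k, qstar k * Real.log (qstar k / p k)) - (∑ k, qstar k * Real.log (L k))
      = ∑ k, qstar k * (- Real.log (∑ j, L j * p j)) := by
        rw [← Finset.sum_sub_distrib]
        refine Finset.sum_congr rfl fun k _ => ?_
        rw [hlog k]; ring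
    _ = - Real.log (∑ k, L k * p k) := by
        rw [← Finset.sum_mul, hsum, one_mul]
end

section
/- Let K be a nonempty finite type, p : K → ℝ a positive probability vector, and L : K → ℝ with L k > 0 for every k. Define f₀(q) := KL(q‖p) − ∑_k q k * Real.log (L k), and define q* : K → ℝ by q* k = (L k * p k) / (∑_j L j * p j). Then for every probability vector q : K → ℝ, f₀(q) = − Real.log (∑_k L k * p k) holds if and only if q = q*. In particular q* is the unique minimizer of f₀ over the probability simplex. (Uniqueness of the solution of the convex program in Proposition 4.) -/
/-- Uniqueness part of Proposition 4: for every probability vector `q`,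
the objective `KL(q‖p) − ∑_k q k * log (L k)` equals the optimal value
`− log (∑_k L k * p k)` if and only if `q = q*`, where
`q* k = L k * p k / ∑_j L j * p j`. Hence `q*` is the unique minimizer. -/
theorem dgc_convex_program_uniqueness
    {K : Type*} [Fintype K] [Nonempty K]
    (p : K → ℝ) (hp : ∀ k, 0 < p k) (hpsum : ∑ k, p k = 1)
    (L : K → ℝ) (hL : ∀ k, 0 < L k)
    (qstar : K → ℝ) (hqstar : ∀ k, qstar k = (L k * p k) / (∑ j, L j * p j))
    (q : K → ℝ) (hq : ∀ k, 0 ≤ q k) (hqsum : ∑ k, q k = 1) :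
    ((∑ k, q k * Real.log (q k / p k)) - (∑ k, q k * Real.log (L k))
        = - Real.log (∑ k, L k * p k))
      ↔ q = qstar := by
  set S : ℝ := ∑ j, L j * p j with hSdef
  have hSpos : 0 < S :=
    Finset.sum_pos (fun j _ => mul_pos (hL j) (hp j)) Finset.univ_nonempty
  have hr : ∀ k, 0 < qstar k := fun k => by
    rw [hqstar]; exact div_pos (mul_pos (hL k) (hp k)) hSpos
  have hrsum : ∑ k, qstar k = 1 := by
    simp only [hqstar]
    rw [← Finset.sum_div, ← hSdef, div_self (ne_of_gt hSpos)]
  -- key algebraic identity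
  have term : ∀ k, q k * Real.log (q k / p k) - q k * Real.log (L k)
      + q k * Real.log S = q k * Real.log (q k / qstar k) := by
    intro k
    rcases eq_or_lt_of_le (hq k) with h | h
    · simp [← h]
    · have hd : (0:ℝ) < L k * p k / S := div_pos (mul_pos (hL k) (hp k)) hSpos
      rw [hqstar, Real.log_div (ne_of_gt h) (ne_of_gt hd),
        Real.log_div (ne_of_gt h) (ne_of_gt (hp k)),
        Real.log_div (ne_of_gt (mul_pos (hL k) (hp k))) (ne_of_gt hSpos),
        Real.log_mul (ne_of_gt (hL k)) (ne_of_gt (hp k))]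
      ring
  have key : (∑ k, q k * Real.log (q k / p k)) - (∑ k, q k * Real.log (L k))
      + Real.log S = ∑ k, q k * Real.log (q k / qstar k) := by
    have := Finset.sum_congr rfl (fun k (_ : k ∈ Finset.univ) => term k)
    rw [Finset.sum_add_distrib, Finset.sum_sub_distrib, ← Finset.sum_mul, hqsum,
      one_mul] at this
    exact this
  -- Gibbs inequality pieces
  set g : K → ℝ := fun k => q k * Real.log (q k / qstar k) - (q k - qstar k) with hgdef
  have hg : ∀ k, 0 ≤ g k := by
    intro k
    rcases eq_or_lt_of_le (hq k) with h | h
    · simp [hgdef, ← h, le_of_lt (hr k)]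
    · have hlog : Real.log (qstar k / q k) ≤ qstar k / q k - 1 :=
        Real.log_le_sub_one_of_pos (div_pos (hr k) h)
      have : Real.log (q k / qstar k) = - Real.log (qstar k / q k) := by
        rw [← Real.log_inv, inv_div]
      simp only [hgdef]
      rw [this]
      have := mul_le_mul_of_nonneg_left hlog (le_of_lt h)
      rw [mul_sub, mul_div_cancel₀ _ (ne_of_gt h), mul_one] at this
      nlinarith
  have hgstrict : ∀ k, q k ≠ qstar k → 0 < g k := by
    intro k hne
    rcases eq_or_lt_of_le (hq k) with h | h
    · simp [hgdef, ← h, hr k]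
    · have hne' : qstar k / q k ≠ 1 := by
        intro hcontra
        exact hne ((div_eq_one_iff_eq (ne_of_gt h)).mp hcontra).symm
      have hlog : Real.log (qstar k / q k) < qstar k / q k - 1 :=
        Real.log_lt_sub_one_of_pos (div_pos (hr k) h) hne'
      have heq : Real.log (q k / qstar k) = - Real.log (qstar k / q k) := by
        rw [← Real.log_inv, inv_div]
      simp only [hgdef]
      rw [heq]
      have := mul_lt_mul_of_pos_left hlog h
      rw [mul_sub, mul_div_cancel₀ _ (ne_of_gt h), mul_one] at this
      nlinarith
  constructor
  · intro hopt
    have hsum0 : ∑ k, q k * Real.log (q k / qstar k) = 0 := by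
      rw [← key]; linarith
    have hgsum : ∑ k, g k = 0 := by
      simp only [hgdef, Finset.sum_sub_distrib, hsum0, hqsum, hrsum]
      ring
    funext k
    by_contra hne
    have hpos : 0 < ∑ k, g k :=
      Finset.sum_pos' (fun j _ => hg j) ⟨k, Finset.mem_univ k, hgstrict k hne⟩
    linarith
  · intro hqe
    subst hqe
    have hsum0 : ∑ k, q k * Real.log (q k / q k) = 0 := by
      apply Finset.sum_eq_zero
      intro k _
      rw [div_self (ne_of_gt (hr k)), Real.log_one, mul_zero]
    linarith [key, hsum0]
end

section
/- Let K be a nonempty finite type, p : K → ℝ a positive probability vector, and L : K → ℝ with L k > 0 for every k. Define q* : K → ℝ by q* k = (L k * p k) / (∑_j L j * p j). Then for every probability vector q : K → ℝ, KL(q‖p) − ∑_k q k * Real.log (L k) + Real.log (∑_j L j * p j) = KL(q‖q*). (Free-energy identity underlying the proof of Proposition 4: the gap between the objective f₀ and its optimal value −log ∑_j L j p j equals the Kullback–Leibler divergence from q to the Gibbs solution q*.) -/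
/-- Free-energy identity underlying Proposition 4: for every probability vector `q`,
`KL(q‖p) − ∑_k q k * log (L k) + log (∑_j L j * p j) = KL(q‖q*)`,
where `q* k = L k * p k / ∑_j L j * p j`. -/
theorem dgc_free_energy_identity
    {K : Type*} [Fintype K] [Nonempty K]
    (p : K → ℝ) (hp : ∀ k, 0 < p k) (hpsum : ∑ k, p k = 1)
    (L : K → ℝ) (hL : ∀ k, 0 < L k)
    (qstar : K → ℝ) (hqstar : ∀ k, qstar k = (L k * p k) / (∑ j, L j * p j))
    (q : K → ℝ) (hq : ∀ k, 0 ≤ q k) (hqsum : ∑ k, q k = 1) :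
    (∑ k, q k * Real.log (q k / p k)) - (∑ k, q k * Real.log (L k))
        + Real.log (∑ j, L j * p j)
      = ∑ k, q k * Real.log (q k / qstar k) := by
  have hS : 0 < ∑ j, L j * p j :=
    Finset.sum_pos (fun j _ => mul_pos (hL j) (hp j)) Finset.univ_nonempty
  set S := ∑ j, L j * p j with hSdef
  have key : ∀ k, q k * Real.log (q k / p k) - q k * Real.log (L k) + q k * Real.log S
      = q k * Real.log (q k / qstar k) := by
    intro k
    rcases eq_or_lt_of_le (hq k) with h | h
    · simp [← h]
    · rw [hqstar k, Real.log_div h.ne' (div_pos (mul_pos (hL k) (hp k)) hS).ne',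
        Real.log_div (mul_pos (hL k) (hp k)).ne' hS.ne',
        Real.log_mul (hL k).ne' (hp k).ne',
        Real.log_div h.ne' (hp k).ne']
      ring
  calc (∑ k, q k * Real.log (q k / p k)) - (∑ k, q k * Real.log (L k)) + Real.log S
      = ∑ k, (q k * Real.log (q k / p k) - q k * Real.log (L k) + q k * Real.log S) := by
        rw [Finset.sum_add_distrib, Finset.sum_sub_distrib, ← Finset.sum_mul, hqsum, one_mul]
    _ = ∑ k, q k * Real.log (q k / qstar k) := by
        exact Finset.sum_congr rfl fun k _ => key k
end
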